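/- Let S ⊆ V be a seed set, let θ* be any distribution attaining the minimum of E_θ[R(c̃, S)] over θ ∈ Θ, and let i ∈ V \ S be a node with max_{γ ∈ Γ(S, i)} L(γ) > 0. Let Γ̄(S, i) := argmax_{γ ∈ Γ(S, i)} L(γ). Then θ*({c : some path γ ∈ Γ̄(S, i) has all its edges in c}) = π*_i = θ*({c : every path γ ∈ Γ̄(S, i) has all its edges in c}); that is, under θ* either all maximizing paths are live simultaneously or none is, and each of these events has probability π*_i. -/

import Mathlib

/-!
For every `θ ∈ Θ` a union bound over the edges of a path `γ` gives `θ(γ live) ≥ L(γ)`, hence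
`θ(i influenced) ≥ π*_i` (and `= 1` for seeds). Conversely, one uniform `u ∈ (0, 1]` can decide all
edges at once: the edge `(a, b)` is dead when `u` falls into a window of length `1 - p(a, b)`
placed right after `1 - π*_a` (shifted left if it would overflow `1`). Along a live edge the
"distance" `1 - π*` grows by at most `1 - p`, so `j` can only be influenced when `u > 1 - π*_j`,
and this coupling attains all the lower bounds simultaneously. Comparing expected spreads, a
minimiser `θ*` therefore has `θ*(i influenced) = π*_i` for every `i ∉ S`.

A maximising path exists because cutting out a cycle does not decrease `L`, and simple paths are
finitely many. For such a path `γ`, `{γ live} ⊆ {i influenced}` while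
`θ*(γ live) ≥ L(γ) = π*_i = θ*(i influenced)`, so on every scenario charged by `θ*`, all
maximising paths are live exactly when `i` is influenced.
-/

open scoped BigOperators

namespace CorrIM

variable {V : Type*} [Fintype V] [DecidableEq V]

/-- A node `i` is influenced: `i ∈ S`, or `i` is reachable from some node of `S`
along the live edges of the scenario `c`. -/
def influenced (c : Finset (V × V)) (S : Finset V) (i : V) : Prop :=
  ∃ s ∈ S, Relation.ReflTransGen (fun a b : V => (a, b) ∈ c) s i

/-- `R c S` : the number of influenced nodes in scenario `c` with seed set `S`. -/
noncomputable def R (c : Finset (V × V)) (S : Finset V) : ℕ :=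
  Set.ncard {i : V | influenced c S i}

/-- The Fréchet class `Θ` : probability distributions on scenarios (subsets of `E`)
whose marginals agree with the edge likelihoods `p`. -/
def memTheta (E : Finset (V × V)) (p : V × V → ℝ) (θ : Finset (V × V) → ℝ) : Prop :=
  (∀ c, 0 ≤ θ c) ∧ (∀ c, θ c ≠ 0 → c ⊆ E) ∧ (∑ c : Finset (V × V), θ c) = 1 ∧
    ∀ e ∈ E, (∑ c : Finset (V × V), if e ∈ c then θ c else 0) = p e

/-- Expected number of influenced nodes under the distribution `θ`. -/
noncomputable def expInf (θ : Finset (V × V) → ℝ) (S : Finset V) : ℝ :=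
  ∑ c : Finset (V × V), θ c * (R c S : ℝ)

/-- The correlation robust influence function `f^corr`. -/
noncomputable def fcorr (E : Finset (V × V)) (p : V × V → ℝ) (S : Finset V) : ℝ :=
  sInf {x : ℝ | ∃ θ, memTheta E p θ ∧ x = expInf θ S}

open Classical in
/-- Probability of the event `A` under the distribution `θ`. -/
noncomputable def prob (θ : Finset (V × V) → ℝ) (A : Finset (V × V) → Prop) : ℝ :=
  ∑ c : Finset (V × V), if A c then θ c else 0

/-- `γ` (a list of nodes `i₀, i₁, …, i_λ`, `λ ≥ 1`) is a directed path from the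
seed set `S` to the node `i` using edges of `E`. -/
def IsPathFrom (E : Finset (V × V)) (S : Finset V) (i : V) (γ : List V) : Prop :=
  2 ≤ γ.length ∧ (∃ s ∈ S, γ.head? = some s) ∧ γ.getLast? = some i ∧
    γ.Chain' (fun a b : V => (a, b) ∈ E)

/-- The list of edges `(i₀,i₁), …, (i_{λ-1}, i_λ)` of a path `γ = [i₀, …, i_λ]`. -/
def pathEdges (γ : List V) : List (V × V) := γ.zip γ.tail

/-- The weight `L(γ) = 1 - ∑_{l=1}^{λ} (1 - p(i_{l-1}, i_l))` of a path. -/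
noncomputable def L (p : V × V → ℝ) (γ : List V) : ℝ :=
  1 - ((pathEdges γ).map (fun e => 1 - p e)).sum

/-- `π*_i = max(0, max_{γ ∈ Γ(S,i)} L(γ))`, with value `0` when `Γ(S,i) = ∅`. -/
noncomputable def piStar (E : Finset (V × V)) (p : V × V → ℝ) (S : Finset V) (i : V) : ℝ :=
  sSup (insert 0 {x : ℝ | ∃ γ : List V, IsPathFrom E S i γ ∧ x = L p γ})

/-- The independent cascade distribution `θ_ic` : each edge of `E` is live
independently with probability `p e`. -/
noncomputable def thetaIC (E : Finset (V × V)) (p : V × V → ℝ) (c : Finset (V × V)) : ℝ :=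
  if c ⊆ E then (∏ e ∈ c, p e) * ∏ e ∈ E \ c, (1 - p e) else 0

/-- The independent cascade influence function `f^ic`. -/
noncomputable def fic (E : Finset (V × V)) (p : V × V → ℝ) (S : Finset V) : ℝ :=
  expInf (thetaIC E p) S

set_option linter.unusedSectionVars false

variable {E : Finset (V × V)} {p : V × V → ℝ} {S : Finset V}

lemma isChain_iff_forall_mem_pathEdges {r : V → V → Prop} :
    ∀ {γ : List V}, γ.IsChain r ↔ ∀ e ∈ pathEdges γ, r e.1 e.2
  | [] => by simp [pathEdges]
  | [x] => by simp [pathEdges]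
  | x :: y :: γ => by
    rw [List.isChain_cons_cons, isChain_iff_forall_mem_pathEdges]
    simp [pathEdges]

lemma pathEdges_append_cons (l₁ : List V) (x : V) (l₂ : List V) :
    pathEdges (l₁ ++ x :: l₂) = pathEdges (l₁ ++ [x]) ++ pathEdges (x :: l₂) := by
  induction l₁ with
  | nil => simp [pathEdges]
  | cons y l₁ ih => cases l₁ <;> simp_all [pathEdges]


lemma IsPathFrom.edges_subset {i : V} {γ : List V} (hγ : IsPathFrom E S i γ) :
    ∀ e ∈ pathEdges γ, e ∈ E :=
  isChain_iff_forall_mem_pathEdges.1 hγ.2.2.2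

lemma IsPathFrom.influenced {i : V} {γ : List V} {c : Finset (V × V)}
    (hγ : IsPathFrom E S i γ) (hlive : ∀ e ∈ pathEdges γ, e ∈ c) : influenced c S i := by
  obtain ⟨-, ⟨s, hs, hhead⟩, hlast, -⟩ := hγ
  cases γ with
  | nil => simp at hhead
  | cons x γ =>
  obtain rfl : x = s := by simpa using hhead
  refine ⟨x, hs, List.relationReflTransGen_of_exists_isChain_cons γ
    (isChain_iff_forall_mem_pathEdges.2 hlive) ?_⟩
  rwa [List.getLast?_eq_some_getLast (List.cons_ne_nil x γ), Option.some_inj] at hlast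

lemma IsPathFrom.concat {a b : V} {γ : List V} (hγ : IsPathFrom E S a γ) (hab : (a, b) ∈ E) :
    IsPathFrom E S b (γ ++ [b]) ∧ L p (γ ++ [b]) = L p γ - (1 - p (a, b)) := by
  obtain ⟨hlen, ⟨s, hs, hhead⟩, hlast, hchain⟩ := hγ
  obtain ⟨l, rfl⟩ : ∃ l, γ = l ++ [a] :=
    ⟨γ.dropLast, (List.dropLast_append_getLast? a hlast).symm⟩
  have hedges : pathEdges (l ++ [a] ++ [b]) = pathEdges (l ++ [a]) ++ [(a, b)] := by
    rw [List.append_assoc, List.singleton_append, pathEdges_append_cons]; rfl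
  refine ⟨⟨by simp only [List.length_append] at hlen ⊢; omega, ⟨s, hs, by simpa using hhead⟩,
    by simp, isChain_iff_forall_mem_pathEdges.2 ?_⟩, ?_⟩
  · rw [hedges]
    intro e he
    rcases List.mem_append.1 he with he | he
    · exact isChain_iff_forall_mem_pathEdges.1 hchain e he
    · rwa [List.mem_singleton.1 he]
  · simp only [L, hedges, List.map_append, List.sum_append, List.map_singleton,
      List.sum_singleton]
    ring

lemma exists_eq_append_cons_append_cons_of_not_nodup {X : Type*} :
    ∀ {l : List X}, ¬ l.Nodup → ∃ x l₁ l₂ l₃, l = l₁ ++ x :: (l₂ ++ x :: l₃)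
  | [], h => absurd List.nodup_nil h
  | y :: l, h => by
    rw [List.nodup_cons, not_and_or, not_not] at h
    rcases h with hy | hl
    · obtain ⟨l₂, l₃, rfl⟩ := List.append_of_mem hy
      exact ⟨y, [], l₂, l₃, rfl⟩
    · obtain ⟨x, l₁, l₂, l₃, rfl⟩ := exists_eq_append_cons_append_cons_of_not_nodup hl
      exact ⟨x, y :: l₁, l₂, l₃, rfl⟩

lemma pathEdges_sublist_of_cut (l₁ : List V) (x : V) (l₂ l₃ : List V) :
    (pathEdges (l₁ ++ x :: l₃)).Sublist (pathEdges (l₁ ++ x :: (l₂ ++ x :: l₃))) := by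
  rw [pathEdges_append_cons l₁ x l₃, pathEdges_append_cons l₁ x (l₂ ++ x :: l₃),
    show x :: (l₂ ++ x :: l₃) = x :: l₂ ++ x :: l₃ from rfl, pathEdges_append_cons (x :: l₂)]
  exact (List.Sublist.refl _).append ((List.sublist_append_right _ _))

lemma L_le_L_of_sublist (hp : ∀ e ∈ E, p e ≤ 1) {γ γ' : List V} (hE : ∀ e ∈ pathEdges γ, e ∈ E)
    (h : (pathEdges γ').Sublist (pathEdges γ)) : L p γ ≤ L p γ' := by
  have := (h.map (fun e => 1 - p e)).sum_le_sum (by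
    simp only [List.mem_map]
    rintro _ ⟨e, he, rfl⟩
    linarith [hp e (hE e he)])
  simp only [L]
  linarith

lemma IsPathFrom.exists_shorter_of_not_nodup (hp : ∀ e ∈ E, p e ≤ 1) {i : V} (hi : i ∉ S)
    {γ : List V} (hγ : IsPathFrom E S i γ) (hnd : ¬ γ.Nodup) :
    ∃ γ', IsPathFrom E S i γ' ∧ γ'.length < γ.length ∧ L p γ ≤ L p γ' := by
  obtain ⟨x, l₁, l₂, l₃, rfl⟩ := exists_eq_append_cons_append_cons_of_not_nodup hnd
  have hsub := pathEdges_sublist_of_cut l₁ x l₂ l₃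
  have hE := hγ.edges_subset
  obtain ⟨-, ⟨s, hs, hhead⟩, hlast, -⟩ := hγ
  have hhead' : (l₁ ++ x :: l₃).head? = some s := by cases l₁ <;> simpa using hhead
  have hlast' : (l₁ ++ x :: l₃).getLast? = some i := by
    rw [← hlast, List.getLast?_append_cons, List.getLast?_append_cons, ← List.cons_append,
      List.getLast?_append_cons]
  refine ⟨l₁ ++ x :: l₃, ⟨?_, ⟨s, hs, hhead'⟩, hlast', ?_⟩, by simp, L_le_L_of_sublist hp
    hE hsub⟩
  · rcases l₁ with _ | ⟨y, l₁⟩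
    · rcases l₃ with _ | ⟨z, l₃⟩
      · simp only [List.nil_append, List.head?_singleton, List.getLast?_singleton,
          Option.some_inj] at hhead' hlast'
        exact absurd (hlast' ▸ hhead' ▸ hs) hi
      · simp
    · simp only [List.cons_append, List.length_cons, List.length_append]
      omega
  · exact isChain_iff_forall_mem_pathEdges.2 fun e he => hE e (hsub.subset he)

lemma IsPathFrom.exists_nodup (hp : ∀ e ∈ E, p e ≤ 1) {i : V} (hi : i ∉ S) {γ : List V}
    (hγ : IsPathFrom E S i γ) : ∃ γ', IsPathFrom E S i γ' ∧ γ'.Nodup ∧ L p γ ≤ L p γ' := by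
  induction h : γ.length using Nat.strong_induction_on generalizing γ with
  | _ n ih =>
  by_cases hnd : γ.Nodup
  · exact ⟨γ, hγ, hnd, le_rfl⟩
  obtain ⟨γ', hγ', hlt, hL⟩ := hγ.exists_shorter_of_not_nodup hp hi hnd
  obtain ⟨δ, hδ, hnd', hL'⟩ := ih _ (h ▸ hlt) hγ' rfl
  exact ⟨δ, hδ, hnd', hL.trans hL'⟩

lemma exists_isGreatest_L (hp : ∀ e ∈ E, p e ≤ 1) {i : V} (hi : i ∉ S)
    (hne : ∃ γ, IsPathFrom E S i γ) :
    ∃ γ, IsPathFrom E S i γ ∧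
      IsGreatest {x : ℝ | ∃ γ : List V, IsPathFrom E S i γ ∧ x = L p γ} (L p γ) := by
  set N := {γ : List V | IsPathFrom E S i γ ∧ γ.Nodup}
  have hN : N.Finite := (List.finite_length_le V (Fintype.card V)).subset
    fun γ hγ => hγ.2.length_le_card
  obtain ⟨γ₀, hγ₀⟩ := hne
  obtain ⟨γ₁, hγ₁, hnd₁, -⟩ := hγ₀.exists_nodup hp hi
  obtain ⟨γ, ⟨hγ, -⟩, hmax⟩ := Set.exists_max_image N (L p) hN ⟨γ₁, hγ₁, hnd₁⟩
  refine ⟨γ, hγ, ⟨γ, hγ, rfl⟩, ?_⟩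
  rintro _ ⟨δ, hδ, rfl⟩
  obtain ⟨δ', hδ', hnd', hL⟩ := hδ.exists_nodup hp hi
  exact hL.trans (hmax δ' ⟨hδ', hnd'⟩)

section prob

open Classical

variable {θ : Finset (V × V) → ℝ} {A B : Finset (V × V) → Prop}

lemma prob_nonneg (hθ : ∀ c, 0 ≤ θ c) : 0 ≤ prob θ A :=
  Finset.sum_nonneg fun c _ => by split_ifs <;> simp [hθ c]

lemma prob_mono (hθ : ∀ c, 0 ≤ θ c) (h : ∀ c, A c → B c) : prob θ A ≤ prob θ B :=
  Finset.sum_le_sum fun c _ => by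
    by_cases hA : A c
    · simp [hA, h c hA]
    · simp only [hA, if_false]
      split_ifs <;> simp [hθ c]

lemma prob_congr (h : ∀ c, θ c ≠ 0 → (A c ↔ B c)) : prob θ A = prob θ B :=
  Finset.sum_congr rfl fun c _ => by
    by_cases hc : θ c = 0
    · simp [hc]
    · by_cases hA : A c
      · rw [if_pos hA, if_pos ((h c hc).1 hA)]
      · rw [if_neg hA, if_neg (mt (h c hc).2 hA)]

lemma prob_add_prob_not : prob θ A + prob θ (fun c => ¬ A c) = ∑ c, θ c := by
  rw [prob, prob, ← Finset.sum_add_distrib]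
  exact Finset.sum_congr rfl fun c _ => by by_cases hA : A c <;> simp [hA]

lemma prob_le_prob_and_add_prob_not (hθ : ∀ c, 0 ≤ θ c) :
    prob θ A ≤ prob θ (fun c => A c ∧ B c) + prob θ (fun c => ¬ B c) := by
  rw [prob, prob, prob, ← Finset.sum_add_distrib]
  exact Finset.sum_le_sum fun c _ => by
    by_cases hA : A c <;> by_cases hB : B c <;> simp [hA, hB, hθ c]

lemma imp_of_prob_eq (hθ : ∀ c, 0 ≤ θ c) (hAB : ∀ c, A c → B c) (heq : prob θ A = prob θ B)
    {c : Finset (V × V)} (hc : θ c ≠ 0) (hB : B c) : A c := by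
  by_contra hA
  have hdiff : prob θ B - prob θ A = ∑ c, if B c ∧ ¬ A c then θ c else 0 := by
    rw [prob, prob, ← Finset.sum_sub_distrib]
    exact Finset.sum_congr rfl fun c _ => by
      by_cases hA : A c
      · simp [hA, hAB c hA]
      · simp [hA]
  rw [heq, sub_self, eq_comm, Finset.sum_eq_zero_iff_of_nonneg
    fun c _ => by split_ifs <;> simp [hθ c]] at hdiff
  simpa [hB, hA, hc] using hdiff c (Finset.mem_univ c)

lemma expInf_eq_sum_prob (S : Finset V) :
    expInf θ S = ∑ j, prob θ (fun c => influenced c S j) := by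
  have hR : ∀ c, (R c S : ℝ) = ∑ j, if influenced c S j then 1 else 0 := fun c => by
    rw [R, Set.ncard_eq_toFinset_card', Set.toFinset_ofPred, Finset.card_filter]
    push_cast
    rfl
  simp only [expInf, prob, hR, Finset.mul_sum, mul_ite, mul_one, mul_zero]
  exact Finset.sum_comm

end prob

namespace memTheta

variable {θ : Finset (V × V) → ℝ}

lemma prob_mem (hθ : memTheta E p θ) {e : V × V} (he : e ∈ E) :
    prob θ (fun c => e ∈ c) = p e := by
  rw [← hθ.2.2.2 e he, prob]
  congr!

lemma prob_not_mem (hθ : memTheta E p θ) {e : V × V} (he : e ∈ E) :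
    prob θ (fun c => e ∉ c) = 1 - p e := by
  have h := prob_add_prob_not (θ := θ) (A := fun c => e ∈ c)
  rw [hθ.2.2.1, hθ.prob_mem he] at h
  linarith

lemma p_mem_Icc (hθ : memTheta E p θ) {e : V × V} (he : e ∈ E) : p e ∈ Set.Icc 0 1 := by
  rw [← hθ.prob_mem he]
  refine ⟨prob_nonneg hθ.1, ?_⟩
  linarith [prob_add_prob_not (θ := θ) (A := fun c => e ∈ c), hθ.2.2.1,
    prob_nonneg (A := fun c => e ∉ c) hθ.1]

lemma prob_eq_one (hθ : memTheta E p θ) {A : Finset (V × V) → Prop} (hA : ∀ c, A c) :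
    prob θ A = 1 := by
  simp [← hθ.2.2.1, prob, hA]

lemma one_sub_sum_le_prob_forall_mem (hθ : memTheta E p θ) :
    ∀ {l : List (V × V)}, (∀ e ∈ l, e ∈ E) →
      1 - (l.map fun e => 1 - p e).sum ≤ prob θ (fun c => ∀ e ∈ l, e ∈ c)
  | [], _ => by simp [← hθ.2.2.1, prob]
  | e :: l, hl => by
    have ih := one_sub_sum_le_prob_forall_mem hθ fun e' he' => hl e' (List.mem_cons_of_mem e he')
    have hsplit := prob_le_prob_and_add_prob_not (B := fun c => e ∈ c) hθ.1
      (A := fun c => ∀ e' ∈ l, e' ∈ c)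
    rw [hθ.prob_not_mem (hl e List.mem_cons_self)] at hsplit
    simp only [List.map_cons, List.sum_cons, List.forall_mem_cons]
    simp only [and_comm] at hsplit
    linarith

end memTheta

noncomputable def reachBound (E : Finset (V × V)) (p : V × V → ℝ) (S : Finset V) (j : V) : ℝ :=
  if j ∈ S then 1 else piStar E p S j

lemma L_le_one (hp : ∀ e ∈ E, p e ≤ 1) {j : V} {γ : List V} (hγ : IsPathFrom E S j γ) :
    L p γ ≤ 1 := by
  have := List.sum_nonneg (l := (pathEdges γ).map fun e => 1 - p e) (by
    simp only [List.mem_map]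
    rintro _ ⟨e, he, rfl⟩
    linarith [hp e (hγ.edges_subset e he)])
  rw [L]
  linarith

lemma bddAbove_insert_zero_L (hp : ∀ e ∈ E, p e ≤ 1) (j : V) :
    BddAbove (insert 0 {x : ℝ | ∃ γ : List V, IsPathFrom E S j γ ∧ x = L p γ}) := by
  refine ⟨1, ?_⟩
  rintro _ (rfl | ⟨γ, hγ, rfl⟩)
  exacts [zero_le_one, L_le_one hp hγ]

lemma piStar_nonneg (hp : ∀ e ∈ E, p e ≤ 1) (j : V) : 0 ≤ piStar E p S j :=
  le_csSup (bddAbove_insert_zero_L hp j) (Set.mem_insert _ _)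

lemma L_le_piStar (hp : ∀ e ∈ E, p e ≤ 1) {j : V} {γ : List V} (hγ : IsPathFrom E S j γ) :
    L p γ ≤ piStar E p S j :=
  le_csSup (bddAbove_insert_zero_L hp j) (Set.mem_insert_of_mem _ ⟨γ, hγ, rfl⟩)

lemma piStar_le {j : V} {b : ℝ} (h0 : 0 ≤ b) (hL : ∀ γ, IsPathFrom E S j γ → L p γ ≤ b) :
    piStar E p S j ≤ b :=
  csSup_le (Set.insert_nonempty _ _) <| by
    rintro _ (rfl | ⟨γ, hγ, rfl⟩)
    exacts [h0, hL γ hγ]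

lemma reachBound_mem_Icc (hp : ∀ e ∈ E, p e ≤ 1) (j : V) : reachBound E p S j ∈ Set.Icc 0 1 := by
  unfold reachBound
  split_ifs
  · simp
  · exact ⟨piStar_nonneg hp j, piStar_le zero_le_one fun γ hγ => L_le_one hp hγ⟩

lemma reachBound_sub_le (hp : ∀ e ∈ E, p e ≤ 1) {a b : V} (hab : (a, b) ∈ E) :
    reachBound E p S a - (1 - p (a, b)) ≤ reachBound E p S b := by
  have hw : 0 ≤ 1 - p (a, b) := by linarith [hp _ hab]
  by_cases hb : b ∈ S
  · rw [show reachBound E p S b = 1 from if_pos hb]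
    linarith [(reachBound_mem_Icc hp (S := S) a).2]
  unfold reachBound
  by_cases ha : a ∈ S
  · have hab' : IsPathFrom E S b [a, b] :=
      ⟨le_rfl, ⟨a, ha, rfl⟩, rfl, List.isChain_pair.2 hab⟩
    have hL : L p [a, b] = p (a, b) := by simp [L, pathEdges]
    simp only [ha, hb, if_true, if_false]
    linarith [L_le_piStar hp hab']
  · simp only [ha, hb, if_false, sub_le_iff_le_add]
    refine piStar_le (by linarith [piStar_nonneg hp (S := S) b]) fun γ hγ => ?_
    obtain ⟨hγb, hL⟩ := hγ.concat (p := p) hab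
    linarith [L_le_piStar hp hγb]

lemma reachBound_le_prob_influenced {θ : Finset (V × V) → ℝ} (hθ : memTheta E p θ) (j : V) :
    reachBound E p S j ≤ prob θ (fun c => influenced c S j) := by
  unfold reachBound
  split_ifs with hj
  · exact (hθ.prob_eq_one fun _ => ⟨j, hj, Relation.ReflTransGen.refl⟩).ge
  · refine piStar_le (prob_nonneg hθ.1) fun γ hγ => ?_
    calc L p γ ≤ prob θ (fun c => ∀ e ∈ pathEdges γ, e ∈ c) :=
          hθ.one_sub_sum_le_prob_forall_mem hγ.edges_subset
      _ ≤ prob θ (fun c => influenced c S j) := prob_mono hθ.1 fun _ => hγ.influenced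

lemma live_of_influenced {θ : Finset (V × V) → ℝ} (hθ : memTheta E p θ) {i : V}
    {γ : List V} (hγ : IsPathFrom E S i γ) (hL : prob θ (fun c => influenced c S i) ≤ L p γ)
    {c : Finset (V × V)} (hc : θ c ≠ 0) (hci : influenced c S i) : ∀ e ∈ pathEdges γ, e ∈ c :=
  imp_of_prob_eq (B := fun c => influenced c S i) hθ.1 (fun _ => hγ.influenced)
    (le_antisymm (prob_mono hθ.1 fun _ => hγ.influenced)
      (hL.trans (hθ.one_sub_sum_le_prob_forall_mem hγ.edges_subset))) hc hci

section scenarioLaw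

open MeasureTheory

variable {Ω : Type*} [MeasurableSpace Ω] (μ : Measure Ω) (f : Ω → Finset (V × V))

noncomputable def scenarioLaw (c : Finset (V × V)) : ℝ := μ.real (f ⁻¹' {c})

variable {μ f}

lemma measurableSet_preimage_singleton (hf : ∀ e, MeasurableSet {ω | e ∈ f ω})
    (c : Finset (V × V)) : MeasurableSet (f ⁻¹' {c}) := by
  have : f ⁻¹' {c} = ⋂ e, {ω | e ∈ f ω ↔ e ∈ c} := by
    ext ω
    simp [Finset.ext_iff]
  rw [this]
  exact MeasurableSet.iInter fun e =>
    measurableSet_setOfPred.2 ((measurableSet_setOfPred.1 (hf e)).iff measurable_const)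

lemma prob_scenarioLaw [IsFiniteMeasure μ] (hf : ∀ e, MeasurableSet {ω | e ∈ f ω})
    (A : Finset (V × V) → Prop) : prob (scenarioLaw μ f) A = μ.real {ω | A (f ω)} := by
  classical
  rw [prob, ← Finset.sum_filter]
  unfold scenarioLaw
  rw [sum_measureReal_preimage_singleton _
    fun c _ => measurableSet_preimage_singleton hf c]
  congr 1
  ext ω
  simp

lemma memTheta_scenarioLaw [IsProbabilityMeasure μ] (hf : ∀ e, MeasurableSet {ω | e ∈ f ω})
    {E : Finset (V × V)} {p : V × V → ℝ} (hfE : ∀ ω, f ω ⊆ E)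
    (hp : ∀ e ∈ E, μ.real {ω | e ∈ f ω} = p e) : memTheta E p (scenarioLaw μ f) := by
  refine ⟨fun c => measureReal_nonneg, fun c hc => ?_, ?_, fun e he => ?_⟩
  · obtain ⟨ω, rfl⟩ : ∃ ω, f ω = c := by
      by_contra! h
      exact hc (by simp [scenarioLaw, Set.preimage_singleton_eq_empty.2 fun ⟨ω, hω⟩ => h ω hω])
    exact hfE ω
  · have := prob_scenarioLaw hf (μ := μ) (fun _ => True)
    simpa [prob] using this
  · rw [← hp e he, ← prob_scenarioLaw hf (fun c => e ∈ c), prob]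
    congr!

end scenarioLaw

section coupling

open MeasureTheory

noncomputable def deadWindow (E : Finset (V × V)) (p : V × V → ℝ) (S : Finset V) (e : V × V) :
    Set ℝ :=
  Set.Ioc (min (1 - reachBound E p S e.1) (p e)) (min (1 - reachBound E p S e.1) (p e) + (1 - p e))

open Classical in
noncomputable def coupledScenario (E : Finset (V × V)) (p : V × V → ℝ) (S : Finset V) (u : ℝ) :
    Finset (V × V) :=
  E.filter fun e => u ∉ deadWindow E p S e

lemma mem_coupledScenario {u : ℝ} {e : V × V} :
    e ∈ coupledScenario E p S u ↔ e ∈ E ∧ u ∉ deadWindow E p S e := by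
  classical
  simp [coupledScenario]

lemma measurableSet_deadWindow (e : V × V) : MeasurableSet (deadWindow E p S e) :=
  measurableSet_Ioc

lemma setOf_mem_coupledScenario {e : V × V} (he : e ∈ E) :
    {u | e ∈ coupledScenario E p S u} = (deadWindow E p S e)ᶜ := by
  ext u
  simp [mem_coupledScenario, he]

lemma measurableSet_setOf_mem_coupledScenario (e : V × V) :
    MeasurableSet {u | e ∈ coupledScenario E p S u} := by
  by_cases he : e ∈ E
  · rw [setOf_mem_coupledScenario he]
    exact (measurableSet_deadWindow e).compl
  · simp [mem_coupledScenario, he]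

lemma lt_of_influenced_coupledScenario (hp : ∀ e ∈ E, p e ≤ 1) {u : ℝ} (hu : 0 < u) {j : V}
    (h : influenced (coupledScenario E p S u) S j) : 1 - reachBound E p S j < u := by
  obtain ⟨s, hs, hsj⟩ := h
  induction hsj with
  | refl => simpa [reachBound, hs] using hu
  | @tail x y _ hxy ih =>
    obtain ⟨he, hdead⟩ := mem_coupledScenario.1 hxy
    have hstep := reachBound_sub_le hp (S := S) he
    have hy1 := (reachBound_mem_Icc hp (S := S) y).1
    simp only [deadWindow, Set.mem_Ioc, not_and, not_le] at hdead
    rcases min_cases (1 - reachBound E p S x) (p (x, y)) with ⟨hmin, hle⟩ | ⟨hmin, hlt⟩ <;>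
      rw [hmin] at hdead <;> linarith [hdead (by linarith)]

variable (E p S) in
lemma exists_memTheta_prob_influenced_le (hp : ∀ e ∈ E, p e ∈ Set.Icc 0 1) :
    ∃ θ, memTheta E p θ ∧ ∀ j, prob θ (fun c => influenced c S j) ≤ reachBound E p S j := by
  set μ := volume.restrict (Set.Ioc (0 : ℝ) 1)
  have hp1 : ∀ e ∈ E, p e ≤ 1 := fun e he => (hp e he).2
  have hμ (X : Set ℝ) : μ.real X = volume.real (X ∩ Set.Ioc 0 1) :=
    measureReal_restrict_apply' measurableSet_Ioc
  have : IsProbabilityMeasure μ := ⟨by simp [μ]⟩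
  refine ⟨scenarioLaw μ (coupledScenario E p S),
    memTheta_scenarioLaw measurableSet_setOf_mem_coupledScenario
      (fun u e he => (mem_coupledScenario.1 he).1) fun e he => ?_, fun j => ?_⟩
  · have hsub : deadWindow E p S e ⊆ Set.Ioc 0 1 := by
      have := (reachBound_mem_Icc hp1 (S := S) e.1).2
      refine Set.Ioc_subset_Ioc ?_ ?_
      · exact le_min (by linarith) (hp e he).1
      · linarith [min_le_right (1 - reachBound E p S e.1) (p e)]
    rw [setOf_mem_coupledScenario he, probReal_compl_eq_one_sub (measurableSet_deadWindow e), hμ,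
      Set.inter_eq_left.2 hsub, deadWindow, Real.volume_real_Ioc_of_le (by linarith [hp1 e he])]
    ring
  · rw [prob_scenarioLaw measurableSet_setOf_mem_coupledScenario, hμ]
    have hr := reachBound_mem_Icc hp1 (S := S) j
    calc volume.real ({u | influenced (coupledScenario E p S u) S j} ∩ Set.Ioc 0 1)
        ≤ volume.real (Set.Ioc (1 - reachBound E p S j) 1) :=
          measureReal_mono (fun u ⟨hinf, hu⟩ =>
            ⟨lt_of_influenced_coupledScenario hp1 hu.1 hinf, hu.2⟩) measure_Ioc_lt_top.ne
      _ = reachBound E p S j := by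
          rw [Real.volume_real_Ioc_of_le (by linarith [hr.1])]
          ring

end coupling

lemma prob_influenced_eq_reachBound {θs : Finset (V × V) → ℝ} (hθs : memTheta E p θs)
    (hmin : ∀ θ : Finset (V × V) → ℝ, memTheta E p θ → expInf θs S ≤ expInf θ S) (j : V) :
    prob θs (fun c => influenced c S j) = reachBound E p S j := by
  obtain ⟨θ₀, hθ₀, hle⟩ := exists_memTheta_prob_influenced_le E p S fun e he => hθs.p_mem_Icc he
  have hge (j : V) := reachBound_le_prob_influenced (S := S) hθs j
  have hsum : ∑ j, prob θs (fun c => influenced c S j) ≤ ∑ j, reachBound E p S j :=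
    calc ∑ j, prob θs (fun c => influenced c S j) = expInf θs S := (expInf_eq_sum_prob S).symm
      _ ≤ expInf θ₀ S := hmin θ₀ hθ₀
      _ = ∑ j, prob θ₀ (fun c => influenced c S j) := expInf_eq_sum_prob S
      _ ≤ ∑ j, reachBound E p S j := Finset.sum_le_sum fun j _ => hle j
  exact ((Finset.sum_eq_sum_iff_of_le fun j _ => hge j).1
    (le_antisymm (Finset.sum_le_sum fun j _ => hge j) hsum) j (Finset.mem_univ j)).symm

theorem maximizing_paths_live_together_general (E : Finset (V × V)) (p : V × V → ℝ)
    (S : Finset V)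
    (θs : Finset (V × V) → ℝ) (hθs : memTheta E p θs)
    (hmin : ∀ θ : Finset (V × V) → ℝ, memTheta E p θ → expInf θs S ≤ expInf θ S)
    (i : V) (hi : i ∉ S)
    (hpos : 0 < sSup {x : ℝ | ∃ γ : List V, IsPathFrom E S i γ ∧ x = L p γ}) :
    prob θs (fun c => ∃ γ : List V,
        (IsPathFrom E S i γ ∧
          L p γ = sSup {x : ℝ | ∃ γ' : List V, IsPathFrom E S i γ' ∧ x = L p γ'}) ∧
        ∀ e ∈ pathEdges γ, e ∈ c) = piStar E p S i ∧
      prob θs (fun c => ∀ γ : List V,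
        (IsPathFrom E S i γ ∧
          L p γ = sSup {x : ℝ | ∃ γ' : List V, IsPathFrom E S i γ' ∧ x = L p γ'}) →
        ∀ e ∈ pathEdges γ, e ∈ c) = piStar E p S i := by
  have hp : ∀ e ∈ E, p e ≤ 1 := fun e he => (hθs.p_mem_Icc he).2
  have hne : ∃ γ, IsPathFrom E S i γ := by
    by_contra! h
    simp [h] at hpos
  obtain ⟨γ₀, hγ₀, hmax⟩ := exists_isGreatest_L hp hi hne
  rw [hmax.csSup_eq] at hpos ⊢
  have hpi : piStar E p S i = L p γ₀ := by
    rw [piStar, csSup_insert hmax.bddAbove ⟨_, hmax.1⟩, hmax.csSup_eq, sup_eq_right.2 hpos.le]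
  have hinf : prob θs (fun c => influenced c S i) = L p γ₀ := by
    rw [prob_influenced_eq_reachBound hθs hmin, reachBound, if_neg hi, hpi]
  rw [hpi]
  refine ⟨(prob_congr fun c hc => ?_).trans hinf, (prob_congr fun c hc => ?_).trans hinf⟩
  · exact ⟨fun ⟨γ, ⟨hγ, _⟩, h⟩ => hγ.influenced h,
      fun h => ⟨γ₀, ⟨hγ₀, rfl⟩, live_of_influenced hθs hγ₀ hinf.le hc h⟩⟩
  · exact ⟨fun h => hγ₀.influenced (h γ₀ ⟨hγ₀, rfl⟩),
      fun h γ ⟨hγ, hL⟩ => live_of_influenced hθs hγ (hinf.trans hL.symm).le hc h⟩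

/-- let `θ*` attain the minimum of `E_θ[R(c̃, S)]` over `Θ` and let
`i ∈ V \ S` with `max_{γ ∈ Γ(S,i)} L(γ) > 0`. Then the `θ*`-probability that some
maximizing path is fully live equals `π*_i`, and so does the `θ*`-probability that
every maximizing path is fully live. -/
theorem maximizing_paths_live_together (E : Finset (V × V)) (p : V × V → ℝ)
    (hp : ∀ e ∈ E, 0 ≤ p e ∧ p e ≤ 1) (S : Finset V)
    (θs : Finset (V × V) → ℝ) (hθs : memTheta E p θs)
    (hmin : ∀ θ : Finset (V × V) → ℝ, memTheta E p θ → expInf θs S ≤ expInf θ S)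
    (i : V) (hi : i ∉ S)
    (hpos : 0 < sSup {x : ℝ | ∃ γ : List V, IsPathFrom E S i γ ∧ x = L p γ}) :
    prob θs (fun c => ∃ γ : List V,
        (IsPathFrom E S i γ ∧
          L p γ = sSup {x : ℝ | ∃ γ' : List V, IsPathFrom E S i γ' ∧ x = L p γ'}) ∧
        ∀ e ∈ pathEdges γ, e ∈ c) = piStar E p S i ∧
      prob θs (fun c => ∀ γ : List V,
        (IsPathFrom E S i γ ∧
          L p γ = sSup {x : ℝ | ∃ γ' : List V, IsPathFrom E S i γ' ∧ x = L p γ'}) →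
        ∀ e ∈ pathEdges γ, e ∈ c) = piStar E p S i :=
  maximizing_paths_live_together_general E p S θs hθs hmin i hi hpos

end CorrIM
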